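/- The agent-alternating formulas ◇_a(◇_b(p ∨ ¬p) ∧ □_b □_a p) → p and ◇_a(◇_b(p ∨ ¬p) ∧ □_b ◇_a p) → ◇_a p (for distinct agents a, b) are theorems of KB5; the first is not a theorem of S4 and the second is not a theorem of B. In particular KB5|_alt is contained neither in S4|_alt nor in B|_alt. -/

import Mathlib

/-- Formulas of the multi-agent modal language: p | ¬φ | (φ ∧ φ) | □_a φ. -/
inductive Fm (A : Type) : Type
  | atom : ℕ → Fm A
  | neg : Fm A → Fm A
  | and : Fm A → Fm A → Fm A
  | box : A → Fm A → Fm A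

namespace Fm
def imp {A : Type} (φ ψ : Fm A) : Fm A := .neg (.and φ (.neg ψ))
def or {A : Type} (φ ψ : Fm A) : Fm A := .neg (.and (.neg φ) (.neg ψ))
def dia {A : Type} (a : A) (φ : Fm A) : Fm A := .neg (.box a (.neg φ))
end Fm

/-- Kripke models with agent set `A` and world type `W`. -/
structure Kripke (A W : Type) where
  R : A → W → W → Prop
  V : ℕ → W → Prop

/-- Satisfaction. -/
def Sat {A W : Type} (M : Kripke A W) : W → Fm A → Prop
  | w, .atom n => M.V n w
  | w, .neg φ => ¬ Sat M w φ
  | w, .and φ ψ => Sat M w φ ∧ Sat M w ψ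
  | w, .box a φ => ∀ v, M.R a w v → Sat M v φ

/-- The fragments L_{-a}: φ ::= p | □_x ψ (x ≠ a, ψ ∈ L_{-x}) | ¬φ | (φ ∧ φ). -/
inductive LMinus {A : Type} : A → Fm A → Prop
  | atom (a : A) (n : ℕ) : LMinus a (.atom n)
  | box {a x : A} {ψ : Fm A} : x ≠ a → LMinus x ψ → LMinus a (.box x ψ)
  | neg {a : A} {φ : Fm A} : LMinus a φ → LMinus a (.neg φ)
  | and {a : A} {φ ψ : Fm A} : LMinus a φ → LMinus a ψ → LMinus a (.and φ ψ)

/-- The agent-alternating fragment L_alt. -/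
inductive LAlt {A : Type} : Fm A → Prop
  | atom (n : ℕ) : LAlt (.atom n)
  | chi {φ : Fm A} (a : A) : LMinus a φ → LAlt φ
  | neg {φ : Fm A} : LAlt φ → LAlt (.neg φ)
  | and {φ ψ : Fm A} : LAlt φ → LAlt ψ → LAlt (.and φ ψ)

/-- The fragments L_X for X ⊆ A: φ ::= p | □_x ψ (x ∈ X, ψ ∈ L_{X\{x}}) | ¬φ | (φ ∧ φ). -/
inductive LX {A : Type} : Set A → Fm A → Prop
  | atom (X : Set A) (n : ℕ) : LX X (.atom n)
  | box {X : Set A} {x : A} {ψ : Fm A} : x ∈ X → LX (X \ {x}) ψ → LX X (.box x ψ)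
  | neg {X : Set A} {φ : Fm A} : LX X φ → LX X (.neg φ)
  | and {X : Set A} {φ ψ : Fm A} : LX X φ → LX X ψ → LX X (.and φ ψ)

/-- Immediate subformula relation. -/
inductive ISub {A : Type} : Fm A → Fm A → Prop
  | neg (φ : Fm A) : ISub φ (.neg φ)
  | andL (φ ψ : Fm A) : ISub φ (.and φ ψ)
  | andR (φ ψ : Fm A) : ISub ψ (.and φ ψ)
  | box (a : A) (φ : Fm A) : ISub φ (.box a φ)

/-- An occurrence type of φ: a nonempty sequence of formulas, each an immediate
subformula of the next, ending in φ. -/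
def IsOcc {A : Type} (l : List (Fm A)) (φ : Fm A) : Prop :=
  l ≠ [] ∧ l.getLast? = some φ ∧ List.Chain' ISub l

/-- A □_a-occurrence of φ. -/
def IsBoxOcc {A : Type} (a : A) (l : List (Fm A)) (φ : Fm A) : Prop :=
  IsOcc l φ ∧ ∃ β, l.head? = some (Fm.box a β)

/-- O ≤ O' iff O' is a suffix of O (prefix-extension order on occurrences). -/
def OccLe {A : Type} (O O' : List (Fm A)) : Prop := O' <:+ O

/-- φ is agent-alternating: between any two nested □_a-occurrences there is a
□_b-occurrence for some b ≠ a. -/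
def AgentAlternating {A : Type} (φ : Fm A) : Prop :=
  ∀ (a : A) (O O' : List (Fm A)), IsBoxOcc a O φ → IsBoxOcc a O' φ → O ≠ O' → OccLe O O' →
    ∃ b : A, b ≠ a ∧ ∃ O'' : List (Fm A), IsBoxOcc b O'' φ ∧ OccLe O O'' ∧ OccLe O'' O'

/-- φ is agent-nonrepeating: no □_a-occurrence lies below another □_a-occurrence. -/
def AgentNonrepeating {A : Type} (φ : Fm A) : Prop :=
  ∀ (a : A) (O O' : List (Fm A)), IsBoxOcc a O φ → IsBoxOcc a O' φ → O ≠ O' → ¬ OccLe O O'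

/-- Boolean evaluation treating atoms and boxed formulas as atomic. -/
def evalP {A : Type} (v : Fm A → Bool) : Fm A → Bool
  | .neg φ => ! evalP v φ
  | .and φ ψ => evalP v φ && evalP v ψ
  | φ => v φ

/-- Propositional tautologies (in the signature ¬, ∧, with boxed formulas atomic). -/
def Taut {A : Type} (φ : Fm A) : Prop := ∀ v : Fm A → Bool, evalP v φ = true

/-- Provability in the smallest normal modal logic containing the axioms `Ax`. -/
inductive Prv {A : Type} (Ax : Fm A → Prop) : Fm A → Prop
  | taut {φ : Fm A} : Taut φ → Prv Ax φ
  | ax {φ : Fm A} : Ax φ → Prv Ax φ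
  | k (a : A) (φ ψ : Fm A) :
      Prv Ax (Fm.imp (.box a (Fm.imp φ ψ)) (Fm.imp (.box a φ) (.box a ψ)))
  | mp {φ ψ : Fm A} : Prv Ax (Fm.imp φ ψ) → Prv Ax φ → Prv Ax ψ
  | nec {φ : Fm A} (a : A) : Prv Ax φ → Prv Ax (.box a φ)

def AxNone {A : Type} : Fm A → Prop := fun _ => False
def AxT {A : Type} : Fm A → Prop := fun χ => ∃ (a : A) (φ : Fm A), χ = Fm.imp (.box a φ) φ
def Ax4 {A : Type} : Fm A → Prop := fun χ => ∃ (a : A) (φ : Fm A), χ = Fm.imp (.box a φ) (.box a (.box a φ))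
def Ax5 {A : Type} : Fm A → Prop := fun χ => ∃ (a : A) (φ : Fm A), χ = Fm.imp (.neg (.box a φ)) (.box a (.neg (.box a φ)))
def AxB {A : Type} : Fm A → Prop := fun χ => ∃ (a : A) (φ : Fm A), χ = Fm.imp φ (.box a (Fm.dia a φ))
def AxD {A : Type} : Fm A → Prop := fun χ => ∃ (a : A) (φ : Fm A), χ = Fm.imp (.box a φ) (Fm.dia a φ)

def Ser {W : Type} (R : W → W → Prop) : Prop := ∀ u, ∃ v, R u v
def Eucl {W : Type} (R : W → W → Prop) : Prop := ∀ u v w, R u v → R u w → R v w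

/-- Agent-alternating bisimulation family (`none` plays the role of `alt`). -/
def IsAAFamily {A W1 W2 : Type} (M : Kripke A W1) (N : Kripke A W2)
    (f : Option A → W1 → W2 → Prop) : Prop :=
  ∀ (o : Option A) (u : W1) (v : W2), f o u v →
    (∀ n, M.V n u ↔ N.V n v) ∧
    (∀ b : A, o ≠ some b →
      (∀ u', M.R b u u' → ∃ v', N.R b v v' ∧ f (some b) u' v') ∧
      (∀ v', N.R b v v' → ∃ u', M.R b u u' ∧ f (some b) u' v'))

/-- Agent-nonrepeating bisimulation family. -/
def IsNRFamily {A W1 W2 : Type} (M : Kripke A W1) (N : Kripke A W2)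
    (f : Set A → W1 → W2 → Prop) : Prop :=
  ∀ (X : Set A) (u : W1) (v : W2), f X u v →
    (∀ n, M.V n u ↔ N.V n v) ∧
    (∀ x ∈ X,
      (∀ u', M.R x u u' → ∃ v', N.R x v v' ∧ f (X \ {x}) u' v') ∧
      (∀ v', N.R x v v' → ∃ u', M.R x u u' ∧ f (X \ {x}) u' v'))

/-- One step in an agent-alternating sequence. -/
def Step {A W : Type} (M : Kripke A W) : (Option A × W) → (Option A × W) → Prop :=
  fun x y => x.1 ≠ y.1 ∧ ∃ b : A, y.1 = some b ∧ M.R b x.2 y.2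

/-- Valid worlds of an agent-alternating unraveling. -/
def ValidSeq {A W : Type} (M : Kripke A W) (s : List (Option A × W)) : Prop :=
  s ≠ [] ∧ (∃ w, s.head? = some (none, w)) ∧ (∀ x ∈ s.tail, x.1 ≠ none) ∧
    List.Chain' (Step M) s

def UWorld {A W : Type} (M : Kripke A W) : Type := {s : List (Option A × W) // ValidSeq M s}

def lastEntry {A W : Type} {M : Kripke A W} (s : UWorld M) : Option A × W :=
  s.val.getLast s.prop.1

/-- N is an agent-alternating unraveling of M. -/
def IsAAUnraveling {A W : Type} (M : Kripke A W) (N : Kripke A (UWorld M)) : Prop :=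
  (∀ (b : A) (s : UWorld M), (lastEntry s).1 ≠ some b →
    ∀ t : UWorld M, N.R b s t ↔ ∃ w', M.R b (lastEntry s).2 w' ∧ t.val = s.val ++ [(some b, w')])
  ∧ (∀ n (s : UWorld M), N.V n s ↔ M.V n (lastEntry s).2)

/-- The canonical relation family between M and any of its agent-alternating unravelings. -/
def PFam {A W : Type} (M : Kripke A W) : Option A → W → UWorld M → Prop :=
  fun o u s => lastEntry s = (o, u)

/-- Finite agent-alternating bisimulation relations: `BisimN M N n (some a)` is ⇆_{-a}^n,
`BisimN M N n none` is ⇆_alt^n. -/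
def BisimN {A W1 W2 : Type} (M : Kripke A W1) (N : Kripke A W2) :
    ℕ → Option A → W1 → W2 → Prop
  | 0, _, u, v => ∀ n, M.V n u ↔ N.V n v
  | (n+1), o, u, v => (∀ m, M.V m u ↔ N.V m v) ∧
      ∀ b : A, o ≠ some b →
        (∀ u', M.R b u u' → ∃ v', N.R b v v' ∧ BisimN M N n (some b) u' v') ∧
        (∀ v', N.R b v v' → ∃ u', M.R b u u' ∧ BisimN M N n (some b) u' v')

/-- Standard n-bisimilarity. -/
def StdBisimN {A W1 W2 : Type} (M : Kripke A W1) (N : Kripke A W2) :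
    ℕ → W1 → W2 → Prop
  | 0, u, v => ∀ n, M.V n u ↔ N.V n v
  | (n+1), u, v => (∀ m, M.V m u ↔ N.V m v) ∧
      ∀ b : A,
        (∀ u', M.R b u u' → ∃ v', N.R b v v' ∧ StdBisimN M N n u' v') ∧
        (∀ v', N.R b v v' → ∃ u', M.R b u u' ∧ StdBisimN M N n u' v')

/-!
From B and 5 one derives 4, and with it `◇_b τ ∧ □_b q → q`: `□_b q` gives `□_b □_b q`,
so `◇_b τ` gives `◇_b □_b q`, which B turns into `q`. Under `◇_a` the two antecedents thus become
`◇_a □_a p`, which B turns into `p`, and `◇_a ◇_a p`, which 4 turns into `◇_a p`.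
The non-derivabilities follow from soundness in models where `b` sees only the current world:
for S4, `a` sees along `false ≤ true` on `Bool` and `p` holds at `true`, refuting the first
formula at `false`; for B, `a` moves at most one step along `ℕ` and `p` holds only at `2`,
refuting the second formula at `0`, which sees `1`, which sees `2`.
-/

open Fm

namespace Prv

variable {A : Type} {Ax : Fm A → Prop} {φ ψ χ : Fm A}

theorem mp_taut (ht : Taut (imp φ ψ)) (h : Prv Ax φ) : Prv Ax ψ :=
  mp (taut ht) h

theorem imp_trans (h₁ : Prv Ax (imp φ ψ)) (h₂ : Prv Ax (imp ψ χ)) : Prv Ax (imp φ χ) :=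
  mp (mp_taut (fun v => by simp only [imp, evalP]; grind) h₁) h₂

theorem contrapose (h : Prv Ax (imp φ ψ)) : Prv Ax (imp (neg ψ) (neg φ)) :=
  mp_taut (fun v => by simp only [imp, evalP]; grind) h

theorem imp_neg_neg (φ : Fm A) : Prv Ax (imp φ (neg (neg φ))) :=
  taut fun v => by simp [imp, evalP]

theorem neg_neg_imp (φ : Fm A) : Prv Ax (imp (neg (neg φ)) φ) :=
  taut fun v => by simp [imp, evalP]

theorem box_mono (a : A) (h : Prv Ax (imp φ ψ)) : Prv Ax (imp (box a φ) (box a ψ)) :=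
  mp (k a φ ψ) (nec a h)

theorem dia_mono (a : A) (h : Prv Ax (imp φ ψ)) : Prv Ax (imp (dia a φ) (dia a ψ)) :=
  contrapose (box_mono a (contrapose h))

theorem box_and_dia_imp_dia_and (a : A) (φ ψ : Fm A) :
    Prv Ax (imp (and (box a φ) (dia a ψ)) (dia a (and φ ψ))) := by
  have hk : Prv Ax (imp (box a φ) (imp (box a (neg (and φ ψ))) (box a (neg ψ)))) :=
    imp_trans (box_mono a (taut fun v => by simp only [imp, evalP]; grind)) (k a _ _)
  refine mp_taut (fun v => ?_) hk
  simp only [imp, dia, evalP]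
  grind

theorem dia_box_imp_of_B (hB : ∀ χ, AxB χ → Ax χ) (a : A) (φ : Fm A) :
    Prv Ax (imp (dia a (box a φ)) φ) := by
  have hB' : Prv Ax (imp (neg φ) (box a (dia a (neg φ)))) := ax (hB _ ⟨a, neg φ, rfl⟩)
  exact imp_trans (imp_trans (dia_mono a (box_mono a (imp_neg_neg φ))) (contrapose hB'))
    (neg_neg_imp φ)

theorem box_imp_box_box_of_B5 (hB : ∀ χ, AxB χ → Ax χ) (h5 : ∀ χ, Ax5 χ → Ax χ)
    (a : A) (φ : Fm A) : Prv Ax (imp (box a φ) (box a (box a φ))) := by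
  have h5' : Prv Ax (imp (dia a (box a φ)) (box a φ)) :=
    imp_trans (contrapose (ax (h5 _ ⟨a, φ, rfl⟩))) (neg_neg_imp _)
  exact imp_trans (ax (hB _ ⟨a, box a φ, rfl⟩)) (box_mono a h5')

theorem dia_dia_imp_dia_of_B5 (hB : ∀ χ, AxB χ → Ax χ) (h5 : ∀ χ, Ax5 χ → Ax χ)
    (a : A) (φ : Fm A) : Prv Ax (imp (dia a (dia a φ)) (dia a φ)) :=
  contrapose (imp_trans (box_imp_box_box_of_B5 hB h5 a (neg φ)) (box_mono a (imp_neg_neg _)))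

theorem dia_and_box_imp_of_B5 (hB : ∀ χ, AxB χ → Ax χ) (h5 : ∀ χ, Ax5 χ → Ax χ)
    (a : A) (τ φ : Fm A) : Prv Ax (imp (and (dia a τ) (box a φ)) φ) := by
  have h4 := box_imp_box_box_of_B5 hB h5 a φ
  have hswap : Prv Ax (imp (and (dia a τ) (box a φ)) (and (box a (box a φ)) (dia a τ))) :=
    mp_taut (fun v => by simp only [imp, dia, evalP]; grind) h4
  have hdrop : Prv Ax (imp (and (box a φ) τ) (box a φ)) :=
    taut fun v => by simp only [imp, evalP]; grind
  exact imp_trans (imp_trans (imp_trans hswap (box_and_dia_imp_dia_and a _ _))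
    (dia_mono a hdrop)) (dia_box_imp_of_B hB a φ)

end Prv

section Semantics

variable {A W : Type} (M : Kripke A W)

theorem sat_imp (w : W) (φ ψ : Fm A) : Sat M w (imp φ ψ) ↔ (Sat M w φ → Sat M w ψ) := by
  simp only [imp, Sat]; tauto

theorem sat_dia (w : W) (a : A) (φ : Fm A) :
    Sat M w (dia a φ) ↔ ∃ v, M.R a w v ∧ Sat M v φ := by
  simp [dia, Sat]

theorem sat_of_taut (w : W) {φ : Fm A} (h : Taut φ) : Sat M w φ := by
  classical
  have key : ∀ ψ : Fm A, Sat M w ψ ↔ evalP (fun χ => decide (Sat M w χ)) ψ = true := by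
    intro ψ
    induction ψ with
    | atom n => exact decide_eq_true_iff.symm
    | neg χ ih => simp [Sat, evalP, ih]
    | and χ ρ ih₁ ih₂ => simp [Sat, evalP, ih₁, ih₂]
    | box a χ => exact decide_eq_true_iff.symm
  exact (key φ).2 (h _)

theorem sat_of_prv {Ax : Fm A → Prop} (hAx : ∀ φ, Ax φ → ∀ w, Sat M w φ) {φ : Fm A}
    (h : Prv Ax φ) (w : W) : Sat M w φ := by
  induction h generalizing w with
  | taut h => exact sat_of_taut M w h
  | ax h => exact hAx _ h w
  | k a φ ψ =>
    simp only [sat_imp]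
    exact fun h₁ h₂ u hu => (sat_imp M u φ ψ).1 (h₁ u hu) (h₂ u hu)
  | mp _ _ ih₁ ih₂ => exact (sat_imp M w _ _).1 (ih₁ w) (ih₂ w)
  | nec a _ ih => exact fun u _ => ih u

theorem sat_axT (hR : ∀ x w, M.R x w w) {χ : Fm A} (h : AxT χ) (w : W) : Sat M w χ := by
  obtain ⟨x, φ, rfl⟩ := h
  exact (sat_imp M w _ _).2 fun hφ => hφ w (hR x w)

theorem sat_ax4 (hR : ∀ x u v w, M.R x u v → M.R x v w → M.R x u w) {χ : Fm A} (h : Ax4 χ)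
    (w : W) : Sat M w χ := by
  obtain ⟨x, φ, rfl⟩ := h
  exact (sat_imp M w _ _).2 fun hφ u hu v hv => hφ v (hR x w u v hu hv)

theorem sat_axB (hR : ∀ x u v, M.R x u v → M.R x v u) {χ : Fm A} (h : AxB χ) (w : W) :
    Sat M w χ := by
  obtain ⟨x, φ, rfl⟩ := h
  exact (sat_imp M w _ _).2 fun hφ u hu => (sat_dia M u x φ).2 ⟨w, hR x w u hu, hφ⟩

end Semantics

namespace Kripke

variable {A W : Type}

def single (a : A) (r : W → W → Prop) (P : W → Prop) : Kripke A W where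
  R x u v := (x = a ∧ r u v) ∨ (x ≠ a ∧ u = v)
  V _ := P

variable {a x : A} {r : W → W → Prop} {P : W → Prop}

@[simp]
theorem single_R_self : (single a r P).R a = r := by
  ext u v; simp [single]

@[simp]
theorem single_R_of_ne (hx : x ≠ a) : (single a r P).R x = Eq := by
  ext u v; simp [single, hx]

@[simp]
theorem single_V (n : ℕ) : (single a r P).V n = P := rfl

theorem single_refl (hr : ∀ w, r w w) (x : A) (w : W) : (single a r P).R x w w := by
  by_cases hx : x = a
  · exact .inl ⟨hx, hr w⟩
  · exact .inr ⟨hx, rfl⟩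

theorem single_trans (hr : ∀ u v w, r u v → r v w → r u w) (x : A) (u v w : W) :
    (single a r P).R x u v → (single a r P).R x v w → (single a r P).R x u w := by
  by_cases hx : x = a
  · subst hx; simpa using hr u v w
  · simp only [single_R_of_ne hx]; exact Eq.trans

theorem single_symm (hr : ∀ u v, r u v → r v u) (x : A) (u v : W) :
    (single a r P).R x u v → (single a r P).R x v u := by
  by_cases hx : x = a
  · subst hx; simpa using hr u v
  · simp only [single_R_of_ne hx]; exact Eq.symm

end Kripke

section AlternatingFormulas

variable {A : Type} {a b : A}

def altBox (a b : A) (p : Fm A) : Fm A :=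
  imp (dia a (and (dia b (or p (neg p))) (box b (box a p)))) p

def altDia (a b : A) (p : Fm A) : Fm A :=
  imp (dia a (and (dia b (or p (neg p))) (box b (dia a p)))) (dia a p)

theorem LMinus.imp {c : A} {φ ψ : Fm A} (hφ : LMinus c φ) (hψ : LMinus c ψ) :
    LMinus c (Fm.imp φ ψ) :=
  .neg (.and hφ (.neg hψ))

theorem LMinus.or {c : A} {φ ψ : Fm A} (hφ : LMinus c φ) (hψ : LMinus c ψ) :
    LMinus c (Fm.or φ ψ) :=
  .neg (.and (.neg hφ) (.neg hψ))

theorem LMinus.dia {c x : A} {φ : Fm A} (hx : x ≠ c) (hφ : LMinus x φ) :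
    LMinus c (Fm.dia x φ) :=
  .neg (.box hx (.neg hφ))

theorem lAlt_altBox (hab : a ≠ b) {p : Fm A} (ha : LMinus a p) (hb : LMinus b p) :
    LAlt (altBox a b p) :=
  .chi b <| .imp
    (.dia hab (.and (.dia hab.symm (.or hb (.neg hb))) (.box hab.symm (.box hab ha)))) hb

theorem lAlt_altDia (hab : a ≠ b) {p : Fm A} (ha : LMinus a p) (hb : LMinus b p) :
    LAlt (altDia a b p) :=
  .chi b <| .imp
    (.dia hab (.and (.dia hab.symm (.or hb (.neg hb))) (.box hab.symm (.dia hab ha)))) (.dia hab ha)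

variable {Ax : Fm A → Prop}

theorem prv_altBox {p : Fm A} (hB : ∀ χ, AxB χ → Ax χ) (h5 : ∀ χ, Ax5 χ → Ax χ) :
    Prv Ax (altBox a b p) :=
  Prv.imp_trans (Prv.dia_mono a (Prv.dia_and_box_imp_of_B5 hB h5 b _ _))
    (Prv.dia_box_imp_of_B hB a p)

theorem prv_altDia {p : Fm A} (hB : ∀ χ, AxB χ → Ax χ) (h5 : ∀ χ, Ax5 χ → Ax χ) :
    Prv Ax (altDia a b p) :=
  Prv.imp_trans (Prv.dia_mono a (Prv.dia_and_box_imp_of_B5 hB h5 b _ _))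
    (Prv.dia_dia_imp_dia_of_B5 hB h5 a p)

theorem not_prv_altBox_of_T4 (hab : a ≠ b) (n : ℕ) :
    ¬ Prv (fun χ => AxT χ ∨ Ax4 χ) (altBox a b (.atom n)) := by
  intro h
  let M : Kripke A Bool := .single a (· ≤ ·) (· = true)
  have hM : ∀ χ, AxT χ ∨ Ax4 χ → ∀ w, Sat M w χ := by
    rintro χ (hT | h4)
    exacts [sat_axT M (Kripke.single_refl le_refl) hT,
      sat_ax4 M (Kripke.single_trans fun _ _ _ => le_trans) h4]
  have := sat_of_prv M hM h false
  simp [M, altBox, Fm.or, sat_imp, sat_dia, Sat, Kripke.single_R_of_ne hab.symm] at this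

theorem not_prv_altDia_of_TB (hab : a ≠ b) (n : ℕ) :
    ¬ Prv (fun χ => AxT χ ∨ AxB χ) (altDia a b (.atom n)) := by
  intro h
  let M : Kripke A ℕ := .single a (fun u v => u ≤ v + 1 ∧ v ≤ u + 1) (· = 2)
  have hM : ∀ χ, AxT χ ∨ AxB χ → ∀ w, Sat M w χ := by
    rintro χ (hT | hB)
    exacts [sat_axT M (Kripke.single_refl fun _ => by omega) hT,
      sat_axB M (Kripke.single_symm fun _ _ => And.symm) hB]
  have := sat_of_prv M hM h 0
  simp [M, altDia, Fm.or, sat_imp, sat_dia, Sat, Kripke.single_R_of_ne hab.symm] at this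
  simpa using this 1

end AlternatingFormulas

/-- the two displayed agent-alternating formulas are theorems of KB5; the first
is not a theorem of S4 and the second not of B; hence KB5|_alt ⊄ S4|_alt and KB5|_alt ⊄ B|_alt. -/
theorem stmt7 {A : Type} (a b : A) (hab : a ≠ b) :
    (LAlt (Fm.imp (Fm.dia a (.and (Fm.dia b (Fm.or (.atom 0) (.neg (.atom 0))))
        (.box b (.box a (.atom 0))))) (.atom 0)) ∧
     LAlt (Fm.imp (Fm.dia a (.and (Fm.dia b (Fm.or (.atom 0) (.neg (.atom 0))))
        (.box b (Fm.dia a (.atom 0))))) (Fm.dia a (.atom 0)))) ∧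
    Prv (fun χ => AxB χ ∨ Ax5 χ)
      (Fm.imp (Fm.dia a (.and (Fm.dia b (Fm.or (.atom 0) (.neg (.atom 0))))
        (.box b (.box a (.atom 0))))) (.atom 0)) ∧
    Prv (fun χ => AxB χ ∨ Ax5 χ)
      (Fm.imp (Fm.dia a (.and (Fm.dia b (Fm.or (.atom 0) (.neg (.atom 0))))
        (.box b (Fm.dia a (.atom 0))))) (Fm.dia a (.atom 0))) ∧
    ¬ Prv (fun χ => AxT χ ∨ Ax4 χ)
      (Fm.imp (Fm.dia a (.and (Fm.dia b (Fm.or (.atom 0) (.neg (.atom 0))))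
        (.box b (.box a (.atom 0))))) (.atom 0)) ∧
    ¬ Prv (fun χ => AxT χ ∨ AxB χ)
      (Fm.imp (Fm.dia a (.and (Fm.dia b (Fm.or (.atom 0) (.neg (.atom 0))))
        (.box b (Fm.dia a (.atom 0))))) (Fm.dia a (.atom 0))) ∧
    (∃ φ : Fm A, LAlt φ ∧ Prv (fun χ => AxB χ ∨ Ax5 χ) φ ∧
      ¬ Prv (fun χ => AxT χ ∨ Ax4 χ) φ) ∧
    (∃ φ : Fm A, LAlt φ ∧ Prv (fun χ => AxB χ ∨ Ax5 χ) φ ∧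
      ¬ Prv (fun χ => AxT χ ∨ AxB χ) φ) := by
  have alt₁ : LAlt (altBox a b (.atom 0)) := lAlt_altBox hab (.atom a 0) (.atom b 0)
  have alt₂ : LAlt (altDia a b (.atom 0)) := lAlt_altDia hab (.atom a 0) (.atom b 0)
  have kb5₁ : Prv (fun χ => AxB χ ∨ Ax5 χ) (altBox a b (.atom 0)) :=
    prv_altBox (fun _ => .inl) (fun _ => .inr)
  have kb5₂ : Prv (fun χ => AxB χ ∨ Ax5 χ) (altDia a b (.atom 0)) :=
    prv_altDia (fun _ => .inl) (fun _ => .inr)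
  have s4₁ := not_prv_altBox_of_T4 hab 0
  have b₂ := not_prv_altDia_of_TB hab 0
  exact ⟨⟨alt₁, alt₂⟩, kb5₁, kb5₂, s4₁, b₂, ⟨_, alt₁, kb5₁, s4₁⟩, ⟨_, alt₂, kb5₂, b₂⟩⟩
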